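/- For every point x₀ ∈ Σ₂ there exists a dense uncountable σ-invariant 1-scrambled set Y of transitive points in Σ₂ such that for every nonnegative integer m and every y ∈ Y, limsup_{n→∞} d(σⁿ(σᵐ(x₀)), σⁿ(y)) = 1 and liminf_{n→∞} d(σⁿ(σᵐ(x₀)), σⁿ(y)) = 0. -/

import Mathlib

open Filter

/-- The shift map on the space `Σ₂` of binary sequences. -/
def shift (β : ℕ → Bool) : ℕ → Bool := fun i => β (i + 1)

/-- The metric `d(β,γ) = ∑ᵢ |βᵢ - γᵢ| / 2^(i+1)` on `Σ₂`. -/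
noncomputable def d2 (β γ : ℕ → Bool) : ℝ :=
  ∑' i : ℕ, |(if β i then (1 : ℝ) else 0) - (if γ i then (1 : ℝ) else 0)| / 2 ^ (i + 1)

/-- A set is dense in `Σ₂` (with respect to the metric `d2`). -/
def Dense2 (Y : Set (ℕ → Bool)) : Prop :=
  ∀ β : ℕ → Bool, ∀ ε : ℝ, 0 < ε → ∃ y ∈ Y, d2 β y < ε

/-!
Cut `ℕ` into the blocks `[2ⁿ - 1, 2ⁿ⁺¹ - 1)` and let a surjection `e : ℕ → Pattern` prescribe
the content of block `n` through `e (unpair n).1`, so that every pattern fills arbitrarily long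
windows arbitrarily far out. For a parameter `t ∈ Σ₂` this gives a point `y t`, and `Y` is the
union of the forward orbits of the `y t`. The windows sit at the same places for all `t`, so:
windows of arbitrary words make every orbit in `Y` dense; constant windows make any two points
of `Y` agree on long stretches and separate `Y` from every periodic point; the windows `t j`
(equal shifts) or windows alternating with period `j - k` (shifts `k < j`) make distinct points
of `Y` disagree on long stretches; and the possibly negated copies of `x₀` with the right offset
make each point of `Y` alternately follow and oppose `σᵐ x₀`. Agreement (resp. disagreement) on
a word of length `L` puts `d` within `2⁻ᴸ` of `0` (resp. `1`). The windows `t j` also make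
`t ↦ y t` injective, so `Y` is uncountable.
-/

lemma summable_inv_two_pow_succ : Summable fun i : ℕ => (2⁻¹ : ℝ) ^ (i + 1) :=
  (summable_nat_add_iff 1).mpr (summable_geometric_of_lt_one (by norm_num) (by norm_num))

lemma tsum_inv_two_pow_succ : ∑' i : ℕ, (2⁻¹ : ℝ) ^ (i + 1) = 1 := by
  simp only [pow_succ', tsum_mul_left, tsum_geometric_inv_two]
  norm_num

lemma tsum_indicator_inv_two_pow_le {s : Set ℕ} {L : ℕ} (hs : ∀ i < L, i ∉ s) :
    ∑' i, s.indicator (fun i => (2⁻¹ : ℝ) ^ (i + 1)) i ≤ 2⁻¹ ^ L := by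
  set f := s.indicator fun i => (2⁻¹ : ℝ) ^ (i + 1)
  have hf : Summable f := summable_inv_two_pow_succ.indicator s
  have hhead : ∑ i ∈ Finset.range L, f i = 0 :=
    Finset.sum_eq_zero fun i hi => Set.indicator_of_notMem (hs i (Finset.mem_range.mp hi)) _
  calc ∑' i, f i = ∑' i, f (i + L) := by rw [← hf.sum_add_tsum_nat_add L, hhead, zero_add]
    _ ≤ ∑' i, (2⁻¹ : ℝ) ^ L * 2⁻¹ ^ (i + 1) := by
        refine ((summable_nat_add_iff L).mpr hf).tsum_le_tsum (fun i => ?_)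
          (summable_inv_two_pow_succ.mul_left _)
        rw [← pow_add, show L + (i + 1) = i + L + 1 by ring]
        exact Set.indicator_le_self' (fun _ _ => by positivity) _
    _ = 2⁻¹ ^ L := by rw [tsum_mul_left, tsum_inv_two_pow_succ, mul_one]

lemma d2_eq_tsum_indicator (β γ : ℕ → Bool) :
    d2 β γ = ∑' i, {i | β i ≠ γ i}.indicator (fun i => (2⁻¹ : ℝ) ^ (i + 1)) i := by
  refine tsum_congr fun i => ?_
  cases hβ : β i <;> cases hγ : γ i <;> simp [hβ, hγ]

lemma d2_nonneg (β γ : ℕ → Bool) : 0 ≤ d2 β γ :=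
  tsum_nonneg fun _ => by positivity

lemma d2_le_of_forall_lt_eq {β γ : ℕ → Bool} {L : ℕ} (h : ∀ i < L, β i = γ i) :
    d2 β γ ≤ 2⁻¹ ^ L := by
  rw [d2_eq_tsum_indicator]
  exact tsum_indicator_inv_two_pow_le fun i hi hne => hne (h i hi)

lemma d2_le_one (β γ : ℕ → Bool) : d2 β γ ≤ 1 := by
  simpa using d2_le_of_forall_lt_eq (β := β) (γ := γ) (L := 0) (by simp)

lemma one_sub_le_d2_of_forall_lt_ne {β γ : ℕ → Bool} {L : ℕ} (h : ∀ i < L, β i ≠ γ i) :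
    1 - 2⁻¹ ^ L ≤ d2 β γ := by
  rw [d2_eq_tsum_indicator]
  set s := {i | β i ≠ γ i}
  have hsum : ∑' i, s.indicator (fun i => (2⁻¹ : ℝ) ^ (i + 1)) i
      + ∑' i, sᶜ.indicator (fun i => (2⁻¹ : ℝ) ^ (i + 1)) i = 1 := by
    rw [← Summable.tsum_add (summable_inv_two_pow_succ.indicator _)
      (summable_inv_two_pow_succ.indicator _)]
    simp only [Set.indicator_self_add_compl_apply, tsum_inv_two_pow_succ]
  have hcompl := tsum_indicator_inv_two_pow_le (s := sᶜ) (L := L) fun i hi => by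
    simpa [s] using h i hi
  linarith

lemma shift_iterate_apply (β : ℕ → Bool) (n i : ℕ) : shift^[n] β i = β (n + i) := by
  induction n generalizing β with
  | zero => simp
  | succ n ih => rw [Function.iterate_succ_apply, ih]; simp [shift, Nat.succ_add]

section LimitsAlongOrbits

variable {α β : ℕ → Bool}

lemma isBoundedUnder_le_d2_iterate :
    IsBoundedUnder (· ≤ ·) atTop fun n => d2 (shift^[n] α) (shift^[n] β) :=
  isBoundedUnder_of ⟨1, fun _ => d2_le_one _ _⟩

lemma isBoundedUnder_ge_d2_iterate :
    IsBoundedUnder (· ≥ ·) atTop fun n => d2 (shift^[n] α) (shift^[n] β) :=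
  isBoundedUnder_of ⟨0, fun _ => d2_nonneg _ _⟩

lemma liminf_d2_iterate_eq_zero
    (h : ∀ L, ∃ᶠ n in atTop, ∀ i < L, α (n + i) = β (n + i)) :
    liminf (fun n => d2 (shift^[n] α) (shift^[n] β)) atTop = 0 := by
  have hle : ∀ L : ℕ, liminf (fun n => d2 (shift^[n] α) (shift^[n] β)) atTop ≤ 2⁻¹ ^ L :=
    fun L => liminf_le_of_frequently_le ((h L).mono fun n hn =>
      d2_le_of_forall_lt_eq (by simpa [shift_iterate_apply] using hn))
      isBoundedUnder_ge_d2_iterate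
  refine le_antisymm (ge_of_tendsto' (tendsto_pow_atTop_nhds_zero_of_lt_one
    (by norm_num) (by norm_num)) hle) ?_
  exact le_liminf_of_le isBoundedUnder_le_d2_iterate.isCoboundedUnder_ge
    (Eventually.of_forall fun _ => d2_nonneg _ _)

lemma one_sub_le_limsup_d2_iterate {L : ℕ}
    (h : ∃ᶠ n in atTop, ∀ i < L, α (n + i) ≠ β (n + i)) :
    1 - 2⁻¹ ^ L ≤ limsup (fun n => d2 (shift^[n] α) (shift^[n] β)) atTop :=
  le_limsup_of_frequently_le (h.mono fun n hn =>
    one_sub_le_d2_of_forall_lt_ne (by simpa [shift_iterate_apply] using hn))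
    isBoundedUnder_le_d2_iterate

lemma half_le_limsup_d2_iterate (h : ∃ᶠ n in atTop, α n ≠ β n) :
    1 / 2 ≤ limsup (fun n => d2 (shift^[n] α) (shift^[n] β)) atTop := by
  have := one_sub_le_limsup_d2_iterate (L := 1) (h.mono fun n hn i hi => by
    rwa [Nat.lt_one_iff.mp hi])
  norm_num at this ⊢
  exact this

lemma limsup_d2_iterate_eq_one
    (h : ∀ L, ∃ᶠ n in atTop, ∀ i < L, α (n + i) ≠ β (n + i)) :
    limsup (fun n => d2 (shift^[n] α) (shift^[n] β)) atTop = 1 := by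
  refine le_antisymm ?_
    (le_of_tendsto' (x := atTop) ?_ fun L => one_sub_le_limsup_d2_iterate (h L))
  · exact limsup_le_of_le isBoundedUnder_ge_d2_iterate.isCoboundedUnder_le
      (Eventually.of_forall fun _ => d2_le_one _ _)
  · simpa using (tendsto_pow_atTop_nhds_zero_of_lt_one (by norm_num : (0 : ℝ) ≤ 2⁻¹)
      (by norm_num)).const_sub 1

end LimitsAlongOrbits

lemma Dense2.mono {S T : Set (ℕ → Bool)} (hS : Dense2 S) (hST : S ⊆ T) : Dense2 T :=
  fun β ε hε => (hS β ε hε).imp fun _ ⟨hy, hd⟩ => ⟨hST hy, hd⟩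

lemma dense2_of_forall_exists_eqOn {S : Set (ℕ → Bool)}
    (h : ∀ (β : ℕ → Bool) (L : ℕ), ∃ y ∈ S, ∀ i < L, β i = y i) : Dense2 S := by
  intro β ε hε
  obtain ⟨L, hL⟩ := exists_pow_lt_of_lt_one hε (by norm_num : (2⁻¹ : ℝ) < 1)
  obtain ⟨y, hy, hβy⟩ := h β L
  exact ⟨y, hy, (d2_le_of_forall_lt_eq hβy).trans_lt hL⟩

lemma uncountable_nat_to_bool : Uncountable (ℕ → Bool) := by
  rw [uncountable_iff_forall_not_surjective]
  intro f hf
  obtain ⟨k, hk⟩ := hf fun n => !f n n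
  simpa using congrFun hk k

/-- Fills the block `[2ⁿ - 1, 2ⁿ⁺¹ - 1)` of `ℕ` by `F c (2ⁿ - 1)` where `c = (unpair n).1`, so that
every `c` owns arbitrarily long blocks arbitrarily far out. -/
def blockSeq {α : Type*} (F : ℕ → ℕ → ℕ → α) (i : ℕ) : α :=
  F (Nat.unpair (Nat.log 2 (i + 1))).1 (2 ^ Nat.log 2 (i + 1) - 1) i

lemma frequently_blockSeq_eq {α : Type*} (c L : ℕ) :
    ∃ᶠ A in atTop, ∀ (F : ℕ → ℕ → ℕ → α), ∀ i < L, blockSeq F (A + i) = F c A (A + i) := by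
  refine frequently_atTop.mpr fun M => ?_
  set n := Nat.pair c (M + L)
  have hn : M + L ≤ n := Nat.right_le_pair c (M + L)
  have hpow : n < 2 ^ n := Nat.lt_two_pow_self
  refine ⟨2 ^ n - 1, by omega, fun F i hi => ?_⟩
  have hlog : Nat.log 2 (2 ^ n - 1 + i + 1) = n :=
    Nat.log_eq_of_pow_le_of_lt_pow (by omega) (by rw [pow_succ]; omega)
  simp [blockSeq, hlog, n]

/-- The patterns filling a block starting at `A`: a finite word `w` written from `A` on, the
constant `t j`, or the bit `b xor x₀ (i + a - c)` at position `i`. -/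
abbrev Pattern : Type := List Bool ⊕ ℕ ⊕ Bool × ℕ × ℕ

def patternBit (x₀ t : ℕ → Bool) : Pattern → ℕ → ℕ → Bool
  | Sum.inl w, A, i => w.getD (i - A) false
  | Sum.inr (Sum.inl j), _, _ => t j
  | Sum.inr (Sum.inr (b, a, c)), _, i => xor b (x₀ (i + a - c))

section Construction

variable (x₀ : ℕ → Bool) (e : ℕ → Pattern)

def scrambledPoint (t : ℕ → Bool) : ℕ → Bool :=
  blockSeq fun c A i => patternBit x₀ t (e c) A i

def scrambledSet : Set (ℕ → Bool) :=
  {z | ∃ k t, z = shift^[k] (scrambledPoint x₀ e t)}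

variable {e}

lemma frequently_scrambledPoint_eq_patternBit (he : e.Surjective) (p : Pattern) (L : ℕ) :
    ∃ᶠ A in atTop, ∀ t, ∀ i < L,
      scrambledPoint x₀ e t (A + i) = patternBit x₀ t p A (A + i) := by
  obtain ⟨c, rfl⟩ := he p
  exact (frequently_blockSeq_eq c L).mono fun A hA t => hA _

lemma frequently_scrambledPoint_eq_word (he : e.Surjective) (β : ℕ → Bool) (L : ℕ) :
    ∃ᶠ A in atTop, ∀ t, ∀ i < L, scrambledPoint x₀ e t (A + i) = β i :=
  (frequently_scrambledPoint_eq_patternBit x₀ he (Sum.inl (List.ofFn fun i : Fin L => β i)) L).mono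
    fun A hA t i hi => by rw [hA t i hi]; simp [patternBit, hi]

lemma frequently_scrambledPoint_eq_param (he : e.Surjective) (j L : ℕ) :
    ∃ᶠ A in atTop, ∀ t, ∀ i < L, scrambledPoint x₀ e t (A + i) = t j :=
  (frequently_scrambledPoint_eq_patternBit x₀ he (Sum.inr (Sum.inl j)) L).mono
    fun _ hA t i hi => hA t i hi

lemma frequently_scrambledPoint_eq_xor (he : e.Surjective) (b : Bool) (a c L : ℕ) :
    ∃ᶠ A in atTop, ∀ t, ∀ i < L, scrambledPoint x₀ e t (A + i) = xor b (x₀ (A + i + a - c)) :=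
  (frequently_scrambledPoint_eq_patternBit x₀ he (Sum.inr (Sum.inr (b, a, c))) L).mono
    fun _ hA t i hi => hA t i hi

lemma scrambledPoint_injective (he : e.Surjective) : (scrambledPoint x₀ e).Injective := by
  intro t s hts
  funext j
  obtain ⟨A, hA⟩ := (frequently_scrambledPoint_eq_param x₀ he j 1).exists
  rw [← hA t 0 one_pos, ← hA s 0 one_pos, hts]

end Construction

section ScrambledSet

variable {x₀ : ℕ → Bool} {e : ℕ → Pattern} {z w : ℕ → Bool}

lemma shift_mem_scrambledSet (hz : z ∈ scrambledSet x₀ e) : shift z ∈ scrambledSet x₀ e := by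
  obtain ⟨k, t, rfl⟩ := hz
  exact ⟨k + 1, t, (Function.iterate_succ_apply' shift k _).symm⟩

lemma range_iterate_subset_scrambledSet (hz : z ∈ scrambledSet x₀ e) :
    Set.range (fun n => shift^[n] z) ⊆ scrambledSet x₀ e := by
  obtain ⟨k, t, rfl⟩ := hz
  rintro _ ⟨n, rfl⟩
  exact ⟨n + k, t, (Function.iterate_add_apply shift n k _).symm⟩

lemma dense2_range_iterate_of_mem_scrambledSet (he : e.Surjective)
    (hz : z ∈ scrambledSet x₀ e) : Dense2 (Set.range fun n => shift^[n] z) := by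
  obtain ⟨k, t, rfl⟩ := hz
  refine dense2_of_forall_exists_eqOn fun β L => ?_
  obtain ⟨A, hA⟩ := (frequently_scrambledPoint_eq_word x₀ he (fun i => β (i - k)) (k + L)).exists
  refine ⟨shift^[A] (shift^[k] _), ⟨A, rfl⟩, fun i hi => ?_⟩
  rw [shift_iterate_apply, shift_iterate_apply, add_left_comm, hA t (k + i) (by omega),
    Nat.add_sub_cancel_left]

lemma frequently_eq_of_mem_scrambledSet (he : e.Surjective) (hz : z ∈ scrambledSet x₀ e)
    (hw : w ∈ scrambledSet x₀ e) (L : ℕ) :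
    ∃ᶠ n in atTop, ∀ i < L, z (n + i) = w (n + i) := by
  obtain ⟨k, t, rfl⟩ := hz
  obtain ⟨j, s, rfl⟩ := hw
  refine (frequently_scrambledPoint_eq_word x₀ he (fun _ => false) (k + j + L)).mono
    fun A hA i hi => ?_
  rw [shift_iterate_apply, shift_iterate_apply, add_left_comm, hA t (k + i) (by omega),
    add_left_comm, hA s (j + i) (by omega)]

lemma frequently_iterate_ne_of_lt (he : e.Surjective) {k j : ℕ} (hkj : k < j)
    (t s : ℕ → Bool) (L : ℕ) :
    ∃ᶠ n in atTop, ∀ i < L,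
      shift^[k] (scrambledPoint x₀ e t) (n + i) ≠ shift^[j] (scrambledPoint x₀ e s) (n + i) := by
  -- the word `(i / (j - k)).bodd` flips whenever `i` grows by `j - k`
  refine (frequently_scrambledPoint_eq_word x₀ he (fun i => (i / (j - k)).bodd) (j + L)).mono
    fun A hA i hi => ?_
  rw [shift_iterate_apply, shift_iterate_apply, add_left_comm, hA t (k + i) (by omega),
    add_left_comm, hA s (j + i) (by omega), show j + i = k + i + (j - k) by omega,
    Nat.add_div_right _ (by omega), Nat.bodd_succ]
  simp

lemma frequently_ne_of_mem_scrambledSet (he : e.Surjective) (hz : z ∈ scrambledSet x₀ e)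
    (hw : w ∈ scrambledSet x₀ e) (hzw : z ≠ w) (L : ℕ) :
    ∃ᶠ n in atTop, ∀ i < L, z (n + i) ≠ w (n + i) := by
  obtain ⟨k, t, rfl⟩ := hz
  obtain ⟨j, s, rfl⟩ := hw
  rcases lt_trichotomy k j with hkj | rfl | hjk
  · exact frequently_iterate_ne_of_lt he hkj t s L
  · obtain ⟨i₀, hi₀⟩ : ∃ i₀, t i₀ ≠ s i₀ :=
      Function.ne_iff.mp fun hts => hzw (by rw [hts])
    refine (frequently_scrambledPoint_eq_param x₀ he i₀ (k + L)).mono fun A hA i hi => ?_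
    rw [shift_iterate_apply, shift_iterate_apply, add_left_comm, hA t (k + i) (by omega),
      hA s (k + i) (by omega)]
    exact hi₀
  · exact (frequently_iterate_ne_of_lt he hjk s t L).mono fun _ hn i hi => (hn i hi).symm

lemma frequently_eq_xor_iterate_of_mem_scrambledSet (he : e.Surjective)
    (hz : z ∈ scrambledSet x₀ e) (m : ℕ) (b : Bool) (L : ℕ) :
    ∃ᶠ n in atTop, ∀ i < L, z (n + i) = xor b (shift^[m] x₀ (n + i)) := by
  obtain ⟨k, t, rfl⟩ := hz
  refine (frequently_scrambledPoint_eq_xor x₀ he b m k (k + L)).mono fun A hA i hi => ?_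
  rw [shift_iterate_apply, shift_iterate_apply, add_left_comm, hA t (k + i) (by omega)]
  congr 2
  omega

lemma frequently_ne_of_periodic (he : e.Surjective) (hz : z ∈ scrambledSet x₀ e)
    {p : ℕ → Bool} {q : ℕ} (hq : 0 < q) (hp : shift^[q] p = p) :
    ∃ᶠ n in atTop, z n ≠ p n := by
  obtain ⟨k, t, rfl⟩ := hz
  have hpq : ∀ a, p (q * a) = p 0 := by
    intro a
    induction a with
    | zero => rfl
    | succ a ih => rw [mul_add_one, add_comm, ← shift_iterate_apply p q, hp, ih]
  refine frequently_atTop.mpr fun N => ?_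
  obtain ⟨A, hAN, hA⟩ :=
    frequently_atTop.mp (frequently_scrambledPoint_eq_word x₀ he (fun _ => !p 0) (k + q + 1)) N
  obtain ⟨a, hlow, hhigh⟩ : ∃ a, A < q * a ∧ q * a ≤ A + q :=
    ⟨A / q + 1, Nat.lt_mul_div_succ A hq, by
      rw [mul_add_one]; exact Nat.add_le_add_right (Nat.mul_div_le A q) q⟩
  -- `q * a` lies in the window, where `z` is `!p 0` while `p (q * a) = p 0`
  refine ⟨q * a, by omega, ?_⟩
  rw [shift_iterate_apply, hpq]
  generalize q * a = n at hlow hhigh ⊢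
  rw [show k + n = A + (k + n - A) by omega, hA t (k + n - A) (by omega)]
  simp

lemma not_countable_scrambledSet (he : e.Surjective) : ¬ (scrambledSet x₀ e).Countable := by
  intro hY
  have := uncountable_nat_to_bool
  refine Set.not_countable_univ (α := ℕ → Bool) ?_
  rw [← Set.preimage_range (scrambledPoint x₀ e)]
  have hrange : Set.range (scrambledPoint x₀ e) ⊆ scrambledSet x₀ e :=
    fun _ ⟨t, ht⟩ => ⟨0, t, ht.symm⟩
  exact (hY.mono hrange).preimage (scrambledPoint_injective x₀ he)

end ScrambledSet

/-- For every point `x₀ ∈ Σ₂` there exists a dense uncountable shift-invariant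
1-scrambled set `Y` of transitive points such that for every `m ≥ 0` and every
`y ∈ Y`, `limsup d(σⁿ(σᵐx₀), σⁿy) = 1` and `liminf d(σⁿ(σᵐx₀), σⁿy) = 0`. -/
theorem shift_scrambled_set_catching_up_with_orbit (x₀ : ℕ → Bool) :
    ∃ Y : Set (ℕ → Bool),
      Dense2 Y ∧
      ¬ Y.Countable ∧
      shift '' Y ⊆ Y ∧
      (∀ y ∈ Y, Dense2 (Set.range fun n => shift^[n] y)) ∧
      (∀ x ∈ Y, ∀ y ∈ Y, x ≠ y →
        1 ≤ limsup (fun n => d2 (shift^[n] x) (shift^[n] y)) atTop ∧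
        liminf (fun n => d2 (shift^[n] x) (shift^[n] y)) atTop = 0) ∧
      (∀ x ∈ Y, ∀ p : ℕ → Bool, (∃ k : ℕ, 0 < k ∧ shift^[k] p = p) →
        (1 : ℝ) / 2 ≤ limsup (fun n => d2 (shift^[n] x) (shift^[n] p)) atTop) ∧
      (∀ m : ℕ, ∀ y ∈ Y,
        limsup (fun n => d2 (shift^[n] (shift^[m] x₀)) (shift^[n] y)) atTop = 1 ∧
        liminf (fun n => d2 (shift^[n] (shift^[m] x₀)) (shift^[n] y)) atTop = 0) := by
  obtain ⟨e, he⟩ := exists_surjective_nat Pattern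
  have hy : scrambledPoint x₀ e (fun _ => false) ∈ scrambledSet x₀ e := ⟨0, _, rfl⟩
  refine ⟨scrambledSet x₀ e, ?_, not_countable_scrambledSet he, ?_,
    fun z hz => dense2_range_iterate_of_mem_scrambledSet he hz,
    fun z hz w hw hzw => ⟨?_, ?_⟩, fun z hz p ⟨q, hq, hp⟩ => ?_, fun m z hz => ⟨?_, ?_⟩⟩
  · exact (dense2_range_iterate_of_mem_scrambledSet he hy).mono
      (range_iterate_subset_scrambledSet hy)
  · exact Set.image_subset_iff.mpr fun z hz => shift_mem_scrambledSet hz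
  · exact (limsup_d2_iterate_eq_one (frequently_ne_of_mem_scrambledSet he hz hw hzw)).ge
  · exact liminf_d2_iterate_eq_zero (frequently_eq_of_mem_scrambledSet he hz hw)
  · exact half_le_limsup_d2_iterate (frequently_ne_of_periodic he hz hq hp)
  · exact limsup_d2_iterate_eq_one fun L =>
      (frequently_eq_xor_iterate_of_mem_scrambledSet he hz m true L).mono fun n hn i hi => by
        simp [hn i hi]
  · exact liminf_d2_iterate_eq_zero fun L =>
      (frequently_eq_xor_iterate_of_mem_scrambledSet he hz m false L).mono fun n hn i hi => by
        simp [hn i hi]
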